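/- Let P ⊂ ℝ^n be a reflexive lattice polytope with P = ⋂_{i=1}^d {u ∈ ℝ^n : ⟨u, v_i⟩ ≥ −1}, v_1,…,v_d ∈ ℤ^n primitive. For each coordinate i ∈ {1,…,n} fix C_i ∈ ℤ with u_i + C_i ≥ 0 on P and set P_i := {(u,h) ∈ ℝ^n × ℝ : u ∈ P, 0 ≤ h ≤ u_i + C_i}; suppose there are polynomials E and E_1,…,E_n with deg E ≤ n, deg E_i ≤ n+1, E(0) = E_i(0) = 1, E(k) = #(kP ∩ ℤ^n) and E_i(k) = #(kP_i ∩ ℤ^{n+1}) for all positive integers k. Define δ_k(P) := (max_{1≤i≤d}(⟨Bc_k(P), v_i⟩ + 1))^{−1}. If δ_k(P) = 1 for all sufficiently large positive integers k, then δ_k(P) = 1 for every positive integer k; equivalently, if Bc_k(P) = 0 for all sufficiently large k then Bc_k(P) = 0 for all positive integers k. -/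

import Mathlib

open scoped BigOperators
open MeasureTheory Polynomial Filter

noncomputable section

/-- A point of `ℝ^n` is a lattice point if all its coordinates are integers. -/
def isLatticePoint (n : ℕ) (u : Fin n → ℝ) : Prop := ∀ i, ∃ z : ℤ, u i = (z : ℝ)

/-- The set of lattice points of a subset `S ⊆ ℝ^n`. -/
def latticePts (n : ℕ) (S : Set (Fin n → ℝ)) : Set (Fin n → ℝ) :=
  {u ∈ S | isLatticePoint n u}

/-- The dilation `kS = {k • x : x ∈ S}`. -/
def dilate (n : ℕ) (k : ℕ) (S : Set (Fin n → ℝ)) : Set (Fin n → ℝ) :=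
  (fun x => (k : ℝ) • x) '' S

/-- A lattice polytope: the convex hull of a nonempty finite set of lattice points. -/
def IsLatticePolytope (n : ℕ) (P : Set (Fin n → ℝ)) : Prop :=
  ∃ V : Finset (Fin n → ℝ), V.Nonempty ∧ (∀ v ∈ V, isLatticePoint n v) ∧
    P = convexHull ℝ (V : Set (Fin n → ℝ))

/-- `P` is full-dimensional (`n`-dimensional) iff it has nonempty interior. -/
def IsFullDim (n : ℕ) (P : Set (Fin n → ℝ)) : Prop := (interior P).Nonempty

/-- The `k`-th quantized barycenter
`Bc_k(P) = (1/(k·#(kP ∩ ℤ^n))) · Σ_{u ∈ kP ∩ ℤ^n} u`. -/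
def Bck (n k : ℕ) (P : Set (Fin n → ℝ)) : Fin n → ℝ :=
  ((k : ℝ) * ((latticePts n (dilate n k P)).ncard : ℝ))⁻¹ •
    ∑ᶠ u ∈ latticePts n (dilate n k P), u

/-- The barycenter `Bc(P) = (∫_P x dx)/vol(P)`. -/
def Bc (n : ℕ) (P : Set (Fin n → ℝ)) : Fin n → ℝ :=
  fun i => (∫ x in P, x i) / (volume P).toReal

/-- `P` is reflexive w.r.t. the primitive integer vectors `v 1, …, v d`:
each `v i` has coordinates with gcd `1`, and
`P = ⋂ i {u : ⟨u, v i⟩ ≥ −1}`. -/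
def IsReflexive (n d : ℕ) (v : Fin d → Fin n → ℤ) (P : Set (Fin n → ℝ)) : Prop :=
  (∀ i, Finset.univ.gcd (v i) = 1) ∧
    P = ⋂ i, {u : Fin n → ℝ | -1 ≤ ∑ j, u j * (v i j : ℝ)}

/-- `max_{1 ≤ i ≤ d} (⟨x, v_i⟩ + 1)`, the reciprocal of the stability threshold
evaluated at the point `x`. -/
def pairingMax (n d : ℕ) (hd : 0 < d) (v : Fin d → Fin n → ℤ) (x : Fin n → ℝ) : ℝ :=
  Finset.univ.sup' ⟨⟨0, hd⟩, Finset.mem_univ _⟩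
    (fun i => (∑ j, x j * (v i j : ℝ)) + 1)

/-- The rooftop polytope over `P` with roof function `f`. -/
def rooftop (n : ℕ) (P : Set (Fin n → ℝ)) (f : (Fin n → ℝ) → ℝ) : Set (Fin (n+1) → ℝ) :=
  {w | ∃ u ∈ P, ∃ h : ℝ, 0 ≤ h ∧ h ≤ f u ∧ w = Fin.snoc u h}


/-!
The coordinate sums of the lattice points of `kP` are polynomial in `k`: counting the lattice
points of `k P_i` fibrewise over those of `kP` gives
`E_i(k) = ∑_{u ∈ kP ∩ ℤ^n} u_i + (k C_i + 1) E(k)`, so `∑_{u ∈ kP ∩ ℤ^n} u_i = Q_i(k)` with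
`Q_i = E_i - (C_i X + 1) E`. Hence `Bc_k(P) = 0` exactly when every `Q_i` vanishes at `k`, and a
polynomial vanishing at all large integers is zero. Finally `δ_k(P) = 1` is equivalent to
`Bc_k(P) = 0`, because `⟨x, v_i⟩ ≤ 0` for all `i` forces the ray through `-x` into the bounded
set `P`.
-/

open Bornology

theorem Polynomial.eq_zero_of_frequently_eval_natCast_eq_zero {R : Type*} [CommRing R]
    [IsDomain R] [CharZero R] {p : R[X]} (h : ∃ᶠ k : ℕ in atTop, p.eval (k : R) = 0) :
    p = 0 := by
  refine p.eq_zero_of_infinite_isRoot <|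
    ((Nat.frequently_atTop_iff_infinite.1 h).image Nat.cast_injective.injOn).mono ?_
  rintro _ ⟨k, hk, rfl⟩
  exact hk

theorem eq_zero_of_forall_nonneg_smul_mem {E : Type*} [NormedAddCommGroup E] [NormedSpace ℝ E]
    {s : Set E} (hs : IsBounded s) {x : E} (hx : ∀ t : ℝ, 0 ≤ t → t • x ∈ s) : x = 0 := by
  obtain ⟨M, hM⟩ := isBounded_iff_forall_norm_le.1 hs
  by_contra hx0
  have hpos : 0 < ‖x‖ := norm_pos_iff.2 hx0
  have hM0 : 0 ≤ M := (norm_nonneg _).trans (hM _ (hx 0 le_rfl))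
  have hfar := hM _ (hx ((M + 1) / ‖x‖) (by positivity))
  rw [norm_smul, Real.norm_of_nonneg (by positivity), div_mul_cancel₀ _ hpos.ne'] at hfar
  linarith

def toRealVec (m : ℕ) (z : Fin m → ℤ) : Fin m → ℝ := fun i => z i

theorem toRealVec_injective (m : ℕ) : Function.Injective (toRealVec m) :=
  fun _ _ h => funext fun i => Int.cast_injective (congrFun h i)

theorem tendsto_toRealVec_cofinite_cocompact (m : ℕ) :
    Tendsto (toRealVec m) cofinite (cocompact _) := by
  have h := Tendsto.pi_map_coprodᵢ fun _ : Fin m => Int.tendsto_coe_cofinite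
  rwa [coprodᵢ_cofinite, coprodᵢ_cocompact] at h

theorem finite_preimage_toRealVec {m : ℕ} {S : Set (Fin m → ℝ)} (hS : IsBounded S) :
    (toRealVec m ⁻¹' S).Finite :=
  (tendsto_cofinite_cocompact_iff.1 (tendsto_toRealVec_cofinite_cocompact m) _
    hS.isCompact_closure).subset (Set.preimage_mono subset_closure)

theorem latticePts_eq_image (m : ℕ) (S : Set (Fin m → ℝ)) :
    latticePts m S = toRealVec m '' (toRealVec m ⁻¹' S) := by
  ext u
  constructor
  · rintro ⟨hu, hlat⟩
    choose z hz using hlat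
    obtain rfl : u = toRealVec m z := funext hz
    exact ⟨z, hu, rfl⟩
  · rintro ⟨z, hz, rfl⟩
    exact ⟨hz, fun i => ⟨z i, rfl⟩⟩

section LatticePoints

variable {m : ℕ} {S : Set (Fin m → ℝ)} {F : Finset (Fin m → ℤ)}

theorem ncard_latticePts (hF : toRealVec m ⁻¹' S = F) : (latticePts m S).ncard = F.card := by
  rw [latticePts_eq_image, hF, Set.ncard_image_of_injective _ (toRealVec_injective m),
    Set.ncard_coe_finset]

theorem finsum_latticePts (hF : toRealVec m ⁻¹' S = F) :
    ∑ᶠ u ∈ latticePts m S, u = ∑ z ∈ F, toRealVec m z := by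
  rw [latticePts_eq_image, hF, ← Finset.coe_image, finsum_mem_coe_finset,
    Finset.sum_image fun _ _ _ _ h => toRealVec_injective m h]

end LatticePoints

theorem mem_dilate_iff {m k : ℕ} (hk : k ≠ 0) {S : Set (Fin m → ℝ)} {u : Fin m → ℝ} :
    u ∈ dilate m k S ↔ (k : ℝ)⁻¹ • u ∈ S := by
  have hk' : (k : ℝ) ≠ 0 := Nat.cast_ne_zero.2 hk
  constructor
  · rintro ⟨y, hy, rfl⟩
    rwa [inv_smul_smul₀ hk']
  · exact fun hu => ⟨_, hu, smul_inv_smul₀ hk' u⟩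

theorem Bornology.IsBounded.dilate {m : ℕ} {S : Set (Fin m → ℝ)} (hS : IsBounded S) (k : ℕ) :
    IsBounded (dilate m k S) := by
  rw [_root_.dilate, Set.image_smul]
  exact hS.smul₀ _

theorem mem_rooftop_iff {n : ℕ} {P : Set (Fin n → ℝ)} {f : (Fin n → ℝ) → ℝ}
    {w : Fin (n + 1) → ℝ} :
    w ∈ rooftop n P f ↔
      Fin.init w ∈ P ∧ 0 ≤ w (Fin.last n) ∧ w (Fin.last n) ≤ f (Fin.init w) := by
  constructor
  · rintro ⟨u, hu, h, h0, hf, rfl⟩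
    simpa only [Fin.init_snoc, Fin.snoc_last] using ⟨hu, h0, hf⟩
  · rintro ⟨hu, h0, hf⟩
    exact ⟨_, hu, _, h0, hf, (Fin.snoc_init_self w).symm⟩

theorem dilate_rooftop {n k : ℕ} (hk : k ≠ 0) (P : Set (Fin n → ℝ)) (f : (Fin n → ℝ) → ℝ) :
    dilate (n + 1) k (rooftop n P f) =
      rooftop n (dilate n k P) (fun u => k * f ((k : ℝ)⁻¹ • u)) := by
  have hk' : (0 : ℝ) < k := Nat.cast_pos.2 (Nat.pos_of_ne_zero hk)
  ext w
  simp only [mem_dilate_iff hk, mem_rooftop_iff, Pi.smul_apply, smul_eq_mul]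
  exact and_congr Iff.rfl (and_congr (mul_nonneg_iff_of_pos_left (inv_pos.2 hk'))
    (inv_mul_le_iff₀ hk'))

theorem preimage_toRealVec_rooftop_coord {n : ℕ} (S : Set (Fin n → ℝ)) (i : Fin n) (b : ℤ) :
    toRealVec (n + 1) ⁻¹' rooftop n S (fun u => u i + b) =
      {w : Fin (n + 1) → ℤ |
        Fin.init w ∈ toRealVec n ⁻¹' S ∧ w (Fin.last n) ∈ Set.Icc 0 (Fin.init w i + b)} := by
  ext w
  simp only [Set.mem_preimage, mem_rooftop_iff, Set.mem_Icc, Set.mem_ofPred_eq]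
  refine and_congr Iff.rfl (and_congr Int.cast_nonneg_iff ?_)
  simp only [toRealVec, Fin.init]
  norm_cast

theorem ncard_latticePts_rooftop_coord {n : ℕ} {S : Set (Fin n → ℝ)} {F : Finset (Fin n → ℤ)}
    (hF : toRealVec n ⁻¹' S = F) (i : Fin n) (b : ℤ) (hb : ∀ z ∈ F, 0 ≤ z i + b) :
    ((latticePts (n + 1) (rooftop n S fun u => u i + b)).ncard : ℝ) =
      ∑ z ∈ F, ((z i : ℝ) + b + 1) := by
  let snocPair : (Σ _ : Fin n → ℤ, ℤ) → Fin (n + 1) → ℤ := fun p => Fin.snoc p.1 p.2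
  have hinj : Function.Injective snocPair := fun p q hpq => by
    obtain ⟨h1, h2⟩ := Fin.snoc_injective2 hpq
    exact Sigma.ext h1 (heq_of_eq h2)
  have hfibres : toRealVec (n + 1) ⁻¹' rooftop n S (fun u => u i + b) =
      ((F.sigma fun z => Finset.Icc 0 (z i + b)).image snocPair : Finset _) := by
    rw [preimage_toRealVec_rooftop_coord]
    ext w
    simp only [hF, Set.mem_ofPred_eq, Finset.coe_image, Set.mem_image, Finset.mem_coe,
      Finset.mem_sigma, Finset.mem_Icc, Set.mem_Icc]
    constructor
    · rintro ⟨hz, hh⟩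
      exact ⟨⟨Fin.init w, w (Fin.last n)⟩, ⟨hz, hh⟩, Fin.snoc_init_self w⟩
    · rintro ⟨⟨z, h⟩, ⟨hz, hh⟩, rfl⟩
      simpa only [snocPair, Fin.init_snoc, Fin.snoc_last] using ⟨hz, hh⟩
  rw [ncard_latticePts hfibres, Finset.card_image_of_injective _ hinj, Finset.card_sigma,
    Nat.cast_sum]
  refine Finset.sum_congr rfl fun z hz => ?_
  rw [Int.card_Icc, sub_zero, ← Int.cast_natCast, Int.toNat_of_nonneg (by linarith [hb z hz])]
  push_cast
  ring

theorem ncard_latticePts_dilate_rooftop_coord {n k : ℕ} (hk : k ≠ 0) {P : Set (Fin n → ℝ)}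
    {F : Finset (Fin n → ℤ)} (hF : toRealVec n ⁻¹' dilate n k P = F) (i : Fin n) (c : ℤ)
    (hc : ∀ u ∈ P, 0 ≤ u i + c) :
    ((latticePts (n + 1) (dilate (n + 1) k (rooftop n P fun u => u i + c))).ncard : ℝ) =
      ∑ z ∈ F, (z i : ℝ) + (k * c + 1) * F.card := by
  have hk' : (k : ℝ) ≠ 0 := Nat.cast_ne_zero.2 hk
  have hroof : dilate (n + 1) k (rooftop n P fun u => u i + c) =
      rooftop n (dilate n k P) fun u => u i + ((k * c : ℤ) : ℝ) := by
    rw [dilate_rooftop hk]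
    congr 1
    funext u
    simp only [Pi.smul_apply, smul_eq_mul]
    push_cast
    field_simp
  have hroof_nonneg : ∀ z ∈ F, 0 ≤ z i + k * c := fun z hz => by
    have hzP : (k : ℝ)⁻¹ • toRealVec n z ∈ P := by
      rw [← mem_dilate_iff hk, ← Set.mem_preimage, hF]
      exact hz
    have hkz : (0 : ℝ) ≤ z i + k * c := by
      have := mul_nonneg (Nat.cast_nonneg k) (hc _ hzP)
      rwa [Pi.smul_apply, smul_eq_mul, mul_add, mul_inv_cancel_left₀ hk'] at this
    exact_mod_cast hkz
  rw [hroof, ncard_latticePts_rooftop_coord hF i _ hroof_nonneg]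
  push_cast
  simp only [Finset.sum_add_distrib, Finset.sum_const, nsmul_eq_mul]
  ring

theorem Bck_eq_zero_iff {n k : ℕ} (hk : k ≠ 0) {P : Set (Fin n → ℝ)} {F : Finset (Fin n → ℤ)}
    (hF : toRealVec n ⁻¹' dilate n k P = F) (hne : F.Nonempty) :
    Bck n k P = 0 ↔ ∑ z ∈ F, toRealVec n z = 0 := by
  rw [Bck, ncard_latticePts hF, finsum_latticePts hF, smul_eq_zero, inv_eq_zero, mul_eq_zero]
  simp [hk, hne.ne_empty]

theorem IsLatticePolytope.isBounded {n : ℕ} {P : Set (Fin n → ℝ)} (hP : IsLatticePolytope n P) :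
    IsBounded P := by
  obtain ⟨V, -, -, rfl⟩ := hP
  exact isBounded_convexHull.2 V.finite_toSet.isBounded

theorem IsLatticePolytope.preimage_toRealVec_dilate_nonempty {n : ℕ} {P : Set (Fin n → ℝ)}
    (hP : IsLatticePolytope n P) (k : ℕ) : (toRealVec n ⁻¹' dilate n k P).Nonempty := by
  obtain ⟨V, ⟨v, hv⟩, hVlat, rfl⟩ := hP
  choose z hz using hVlat v hv
  refine ⟨k • z, v, subset_convexHull ℝ _ hv, funext fun j => ?_⟩
  simp [toRealVec, hz j]

theorem pairingMax_eq_one_iff {n d : ℕ} (hd : 0 < d) (v : Fin d → Fin n → ℤ)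
    (hbdd : IsBounded (⋂ i, {u : Fin n → ℝ | -1 ≤ ∑ j, u j * (v i j : ℝ)}))
    {x : Fin n → ℝ} : pairingMax n d hd v x = 1 ↔ x = 0 := by
  constructor
  · intro hx
    have hle : ∀ i, ∑ j, x j * (v i j : ℝ) ≤ 0 := fun i => by
      have := Finset.le_sup' (fun i => (∑ j, x j * (v i j : ℝ)) + 1) (Finset.mem_univ i)
      linarith [this.trans_eq hx]
    refine neg_eq_zero.1 (eq_zero_of_forall_nonneg_smul_mem hbdd fun t ht => ?_)
    refine Set.mem_iInter.2 fun i => ?_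
    have hsum : ∑ j, (t • -x) j * (v i j : ℝ) = -(t * ∑ j, x j * (v i j : ℝ)) := by
      simp only [Pi.smul_apply, Pi.neg_apply, smul_eq_mul, Finset.mul_sum]
      rw [← Finset.sum_neg_distrib]
      exact Finset.sum_congr rfl fun j _ => by ring
    simp only [Set.mem_ofPred_eq, hsum]
    nlinarith [hle i]
  · rintro rfl
    simpa [pairingMax] using Finset.sup'_const _ _

theorem Bck_eq_zero_iff_forall_eval_eq_zero {n k : ℕ} (hk : k ≠ 0) {P : Set (Fin n → ℝ)}
    (hP : IsLatticePolytope n P) {C : Fin n → ℤ} (hC : ∀ i : Fin n, ∀ u ∈ P, 0 ≤ u i + (C i : ℝ))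
    {E : ℝ[X]} {Ei : Fin n → ℝ[X]}
    (hE : E.eval (k : ℝ) = ((latticePts n (dilate n k P)).ncard : ℝ))
    (hEi : ∀ i : Fin n, (Ei i).eval (k : ℝ) =
      ((latticePts (n + 1) (dilate (n + 1) k (rooftop n P fun u => u i + C i))).ncard : ℝ)) :
    Bck n k P = 0 ↔ ∀ i, (Ei i - (Polynomial.C (C i : ℝ) * X + 1) * E).eval (k : ℝ) = 0 := by
  obtain ⟨F, hF⟩ := (finite_preimage_toRealVec (hP.isBounded.dilate k)).exists_finset_coe
  replace hF := hF.symm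
  have hne : F.Nonempty := by
    rw [← Finset.coe_nonempty, ← hF]
    exact hP.preimage_toRealVec_dilate_nonempty k
  rw [Bck_eq_zero_iff hk hF hne, funext_iff]
  refine forall_congr' fun i => ?_
  have hQ : (Ei i - (Polynomial.C (C i : ℝ) * X + 1) * E).eval (k : ℝ) = ∑ z ∈ F, (z i : ℝ) := by
    rw [eval_sub, eval_mul, hEi i, hE, ncard_latticePts hF,
      ncard_latticePts_dilate_rooftop_coord hk hF i (C i) (hC i)]
    simp only [eval_add, eval_mul, eval_C, eval_X, eval_one]
    ring
  rw [hQ, Finset.sum_apply, Pi.zero_apply]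
  rfl

theorem delta_k_stabilization_general
    (n d : ℕ) (hd : 0 < d) (v : Fin d → Fin n → ℤ) (P : Set (Fin n → ℝ))
    (hP : IsLatticePolytope n P)
    (href : IsReflexive n d v P)
    (C : Fin n → ℤ) (hC : ∀ i : Fin n, ∀ u ∈ P, 0 ≤ u i + (C i : ℝ))
    (E : Polynomial ℝ) (Ei : Fin n → Polynomial ℝ)
    (hE : ∀ k : ℕ, 0 < k → E.eval (k : ℝ) = ((latticePts n (dilate n k P)).ncard : ℝ))
    (hEi : ∀ i : Fin n, ∀ k : ℕ, 0 < k →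
      (Ei i).eval (k : ℝ)
        = ((latticePts (n+1)
            (dilate (n+1) k (rooftop n P (fun u => u i + (C i : ℝ))))).ncard : ℝ)) :
    ((∃ K : ℕ, ∀ k : ℕ, K ≤ k → (pairingMax n d hd v (Bck n k P))⁻¹ = 1) →
      ∀ k : ℕ, 0 < k → (pairingMax n d hd v (Bck n k P))⁻¹ = 1)
    ∧ ((∃ K : ℕ, ∀ k : ℕ, K ≤ k → Bck n k P = 0) →
      ∀ k : ℕ, 0 < k → Bck n k P = 0) := by
  have hBck : ∀ k : ℕ, 0 < k → (Bck n k P = 0 ↔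
      ∀ i, (Ei i - (Polynomial.C (C i : ℝ) * X + 1) * E).eval (k : ℝ) = 0) := fun k hk =>
    Bck_eq_zero_iff_forall_eval_eq_zero hk.ne' hP hC (hE k hk) fun i => hEi i k hk
  have hstab : (∃ K : ℕ, ∀ k : ℕ, K ≤ k → Bck n k P = 0) → ∀ k : ℕ, 0 < k → Bck n k P = 0 := by
    rintro ⟨K, hK⟩ k hk
    refine (hBck k hk).2 fun i => ?_
    have hQ := Polynomial.eq_zero_of_frequently_eval_natCast_eq_zero <|
      ((eventually_ge_atTop (K + 1)).mono fun m hm =>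
        (hBck m (by omega)).1 (hK m (by omega)) i).frequently
    rw [hQ, eval_zero]
  have hδ : ∀ k, (pairingMax n d hd v (Bck n k P))⁻¹ = 1 ↔ Bck n k P = 0 := fun k =>
    inv_eq_one.trans (pairingMax_eq_one_iff hd v (href.2 ▸ hP.isBounded))
  simp only [hδ]
  exact ⟨hstab, hstab⟩

/-- for a reflexive lattice polytope (with Ehrhart polynomials of `P`
and of the rooftop polytopes `P_i` as hypotheses), if `δ_k(P) = 1` for all sufficiently
large `k` then `δ_k(P) = 1` for every positive integer `k`; equivalently, if
`Bc_k(P) = 0` for all sufficiently large `k` then `Bc_k(P) = 0` for all positive `k`. -/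
theorem delta_k_stabilization
    (n d : ℕ) (hd : 0 < d) (v : Fin d → Fin n → ℤ) (P : Set (Fin n → ℝ))
    (hP : IsLatticePolytope n P) (hdim : IsFullDim n P)
    (href : IsReflexive n d v P)
    (C : Fin n → ℤ) (hC : ∀ i : Fin n, ∀ u ∈ P, 0 ≤ u i + (C i : ℝ))
    (E : Polynomial ℝ) (Ei : Fin n → Polynomial ℝ)
    (hEdeg : E.natDegree ≤ n) (hEideg : ∀ i, (Ei i).natDegree ≤ n + 1)
    (hE0 : E.eval 0 = 1) (hEi0 : ∀ i, (Ei i).eval 0 = 1)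
    (hE : ∀ k : ℕ, 0 < k → E.eval (k : ℝ) = ((latticePts n (dilate n k P)).ncard : ℝ))
    (hEi : ∀ i : Fin n, ∀ k : ℕ, 0 < k →
      (Ei i).eval (k : ℝ)
        = ((latticePts (n+1)
            (dilate (n+1) k (rooftop n P (fun u => u i + (C i : ℝ))))).ncard : ℝ)) :
    ((∃ K : ℕ, ∀ k : ℕ, K ≤ k → (pairingMax n d hd v (Bck n k P))⁻¹ = 1) →
      ∀ k : ℕ, 0 < k → (pairingMax n d hd v (Bck n k P))⁻¹ = 1)
    ∧ ((∃ K : ℕ, ∀ k : ℕ, K ≤ k → Bck n k P = 0) →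
      ∀ k : ℕ, 0 < k → Bck n k P = 0) :=
  delta_k_stabilization_general n d hd v P hP href C hC E Ei hE hEi
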